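/- Let σ ∈ 𝔖 with σ ≠ 𝔬. Write m_σ = 2^k·μ_σ with μ_σ odd and k ∈ ℕ₀, and let ℓ ∈ ℕ₀ be the unique nonnegative integer with 1/2 ≤ 2^ℓ(n_σ − m_σ)/m_σ < 1. Set ρ = max{0, k − ℓ} and τ = max{0, ℓ − k}. Then n_{K(σ)} = 2^ρ·μ_σ and m_{K(σ)} = 2^τ·(n_σ − m_σ). -/

import Mathlib

/-- The positive rational numbers ℚ₊. -/
abbrev Qpos := {q : ℚ // 0 < q}

/-- Octave equivalence on ℚ₊: `q₁ ∼ q₂` iff `q₁ = 2^n * q₂` for some `n ∈ ℤ`. -/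
def octaveRel (q₁ q₂ : Qpos) : Prop := ∃ n : ℤ, (q₁ : ℚ) = 2 ^ n * (q₂ : ℚ)

/-- The group of musical intervals `𝔖 = ℚ₊/∼`. -/
def MusInt := Quot octaveRel

/-- The musical interval `[q]` represented by a positive rational `q`. -/
def cls (q : ℚ) (h : 0 < q) : MusInt := Quot.mk octaveRel ⟨q, h⟩

/-- The octave `𝔬 = [1/2]`. -/
def octave : MusInt := cls (1/2) (by norm_num)

/-- `repSpec σ (m, n)` says that `(m, n)` is a reduced representative of `σ`,
i.e. `σ = [m/n]`, `1/2 ≤ m/n < 1` and `gcd(n, m) = 1`. -/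
def repSpec (σ : MusInt) (p : ℕ × ℕ) : Prop :=
  ∃ h : (0 : ℚ) < (p.1 : ℚ) / (p.2 : ℚ),
    σ = cls ((p.1 : ℚ) / (p.2 : ℚ)) h ∧
    (1 : ℚ) / 2 ≤ (p.1 : ℚ) / (p.2 : ℚ) ∧ (p.1 : ℚ) / (p.2 : ℚ) < 1 ∧
    Nat.gcd p.2 p.1 = 1

open Classical in
/-- The canonical reduced representative `(m_σ, n_σ)` of a musical interval. -/
noncomputable def rep (σ : MusInt) : ℕ × ℕ :=
  if h : ∃ p, repSpec σ p then h.choose else (1, 2)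

/-- The numerator `m_σ`, so that `σ = [m_σ/n_σ]`. -/
noncomputable def mVal (σ : MusInt) : ℕ := (rep σ).1

/-- The map `𝒩`, sending `σ` to the denominator `n_σ`, so that `σ = [m_σ/n_σ]`. -/
noncomputable def nVal (σ : MusInt) : ℕ := (rep σ).2

/-- The Kepler map `K(σ) = [(n_σ - m_σ)/m_σ]`. -/
noncomputable def kepler (σ : MusInt) : MusInt :=
  if h : (0 : ℚ) < ((nVal σ : ℚ) - (mVal σ : ℚ)) / (mVal σ : ℚ) then
    cls (((nVal σ : ℚ) - (mVal σ : ℚ)) / (mVal σ : ℚ)) h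
  else octave

/-- The height `𝔥(σ) = min {ℓ ∈ ℕ₀ : K^ℓ(σ) = 𝔬}`. -/
noncomputable def height (σ : MusInt) : ℕ := sInf {ℓ : ℕ | kepler^[ℓ] σ = octave}

/-- `n` is an Euclidean Gauss–Wantzel number: `n = 2^k * 3^l * 5^m` with
`l, m ∈ {0, 1}` and `n > 1`. -/
def IsEuclidean (n : ℕ) : Prop :=
  1 < n ∧ ∃ k l m : ℕ, (l = 0 ∨ l = 1) ∧ (m = 0 ∨ m = 1) ∧ n = 2 ^ k * 3 ^ l * 5 ^ m

/-- `p` is a Fermat prime: a prime of the form `2^(2^n) + 1`. -/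
def IsFermatPrime (p : ℕ) : Prop := p.Prime ∧ ∃ n : ℕ, p = 2 ^ (2 ^ n) + 1

/-- `n` is a Gauss–Wantzel number: `n > 1` is a power of `2` times a product of
distinct Fermat primes. -/
def IsGaussWantzel (n : ℕ) : Prop :=
  1 < n ∧ ∃ (k : ℕ) (s : Finset ℕ), (∀ p ∈ s, IsFermatPrime p) ∧ n = 2 ^ k * ∏ p ∈ s, p

/-- `σ` is Euclidean consonant: all members of its second Kepler sequence are
Euclidean Gauss–Wantzel numbers. -/
def EuclideanConsonant (σ : MusInt) : Prop :=
  ∀ j ≤ height σ, IsEuclidean (nVal (kepler^[j] σ))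

/-- `σ` is Gaussian consonant: all members of its second Kepler sequence are
Gauss–Wantzel numbers. -/
def GaussianConsonant (σ : MusInt) : Prop :=
  ∀ j ≤ height σ, IsGaussWantzel (nVal (kepler^[j] σ))

/-! Writing `m = 2^k μ`, the fraction `2^ℓ (n - m) / m` lies in `[1/2, 1)` and represents `K(σ)`;
cancelling the common power of two turns it into `2^(ℓ-k) (n - m) / (2^(k-ℓ) μ)`. This fraction is
in lowest terms: `μ ∣ m` is coprime to `n - m`, and if `k > ℓ` then `m` is even, so `n` and hence
`n - m` are odd. Reduced representatives in `[1/2, 1)` are unique because two of them differ by a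
power of two, which must be `1`. -/

lemma octaveRel_equivalence : Equivalence octaveRel where
  refl _ := ⟨0, by simp⟩
  symm := by
    rintro _ _ ⟨n, h⟩
    exact ⟨-n, by rw [h, ← mul_assoc, ← zpow_add₀ two_ne_zero]; simp⟩
  trans := by
    rintro _ _ _ ⟨n, h⟩ ⟨m, h'⟩
    exact ⟨n + m, by rw [h, h', ← mul_assoc, ← zpow_add₀ two_ne_zero]⟩

lemma cls_eq_cls_iff {q q' : ℚ} (h : 0 < q) (h' : 0 < q') :
    cls q h = cls q' h' ↔ ∃ t : ℤ, q = 2 ^ t * q' :=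
  Quot.eq.trans octaveRel_equivalence.eqvGen_iff

section DyadicWindow

variable {K : Type*} [Field K] [LinearOrder K] [IsStrictOrderedRing K]

lemma exists_two_zpow_mul_mem_Ico [FloorSemiring K] {q : K} (hq : 0 < q) :
    ∃ t : ℤ, 2 ^ t * q ∈ Set.Ico (1 / 2 : K) 1 := by
  set L := Int.log 2 q
  have hlow : (2 : K) ^ L ≤ q := by exact_mod_cast Int.zpow_log_le_self one_lt_two hq
  have hup : q < (2 : K) ^ (L + 1) := by exact_mod_cast Int.lt_zpow_succ_log_self one_lt_two q
  refine ⟨-L - 1, ?_, ?_⟩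
  · calc (1 / 2 : K) = 2 ^ (-L - 1) * 2 ^ L := by
          rw [← zpow_add₀ two_ne_zero, show -L - 1 + L = -1 by ring, zpow_neg_one, one_div]
      _ ≤ 2 ^ (-L - 1) * q := by gcongr
  · calc 2 ^ (-L - 1) * q < 2 ^ (-L - 1) * 2 ^ (L + 1) := by gcongr
      _ = 1 := by rw [← zpow_add₀ two_ne_zero, show -L - 1 + (L + 1) = 0 by ring, zpow_zero]

lemma eq_zero_of_two_zpow_mul_mem_Ico {q : K} {t : ℤ} (hq : q ∈ Set.Ico (1 / 2 : K) 1)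
    (ht : 2 ^ t * q ∈ Set.Ico (1 / 2 : K) 1) : t = 0 := by
  obtain ⟨hq₁, hq₂⟩ := hq
  obtain ⟨ht₁, ht₂⟩ := ht
  rcases lt_trichotomy t 0 with hneg | rfl | hpos
  · have : (2 : K) ^ t ≤ 2 ^ (-1 : ℤ) := zpow_le_zpow_right₀ one_le_two (by omega)
    rw [zpow_neg_one] at this
    nlinarith
  · rfl
  · have : (2 : K) ^ (1 : ℤ) ≤ 2 ^ t := zpow_le_zpow_right₀ one_le_two hpos
    rw [zpow_one] at this
    nlinarith

end DyadicWindow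

lemma Rat.exists_coprime_natCast_div {r : ℚ} (hr : 0 < r) :
    ∃ a b : ℕ, Nat.Coprime b a ∧ r = a / b :=
  ⟨r.num.natAbs, r.den, r.reduced.symm, by
    rw [Nat.cast_natAbs, Int.cast_abs, abs_of_pos (by exact_mod_cast Rat.num_pos.mpr hr),
      Rat.num_div_den]⟩

lemma Rat.natCast_div_inj {a b c d : ℕ} (hb : 0 < b) (hd : 0 < d) (h₁ : a.Coprime b)
    (h₂ : c.Coprime d) (h : (a : ℚ) / b = c / d) : a = c ∧ b = d := by
  have := Rat.div_int_inj (a := a) (b := b) (c := c) (d := d) (by exact_mod_cast hb)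
    (by exact_mod_cast hd) (by simpa using h₁) (by simpa using h₂)
    (by simpa only [Int.cast_natCast] using h)
  exact_mod_cast this

lemma pow_tsub_div_pow_tsub {G₀ : Type*} [CommGroupWithZero G₀] {a : G₀} (ha : a ≠ 0)
    (k ℓ : ℕ) : a ^ (ℓ - k) / a ^ (k - ℓ) = a ^ ℓ / a ^ k := by
  rcases le_total k ℓ with h | h
  · rw [Nat.sub_eq_zero_of_le h, pow_zero, div_one, pow_sub₀ a ha h, div_eq_mul_inv]
  · rw [Nat.sub_eq_zero_of_le h, pow_zero, pow_sub₀ a ha h, one_div, mul_inv, inv_inv,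
      div_eq_mul_inv, mul_comm]

lemma Nat.Coprime.two_pow_tsub_mul_odd {m n k ℓ μ : ℕ} (hnm : Nat.Coprime n m) (hmn : m ≤ n)
    (hμ : Odd μ) (hm : m = 2 ^ k * μ) :
    Nat.Coprime (2 ^ (k - ℓ) * μ) (2 ^ (ℓ - k) * (n - m)) := by
  have hμ_sub : Nat.Coprime μ (n - m) :=
    ((Nat.coprime_sub_self_right hmn).mpr hnm.symm).coprime_dvd_left (Dvd.intro_left _ hm.symm)
  rcases le_total k ℓ with h | h
  · rw [Nat.sub_eq_zero_of_le h, pow_zero, one_mul]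
    exact Nat.Coprime.mul_right (hμ.coprime_two_right.pow_right _) hμ_sub
  · rw [Nat.sub_eq_zero_of_le h, pow_zero, one_mul]
    refine Nat.Coprime.mul_left ?_ hμ_sub
    rcases (k - ℓ).eq_zero_or_pos with h₀ | h₀
    · rw [h₀, pow_zero]
      exact Nat.coprime_one_left _
    · have hm_even : Even m := hm ▸ (Nat.even_pow.mpr ⟨even_two, by omega⟩).mul_right μ
      have hn_odd : Odd n := Nat.coprime_two_right.mp (hnm.coprime_dvd_right hm_even.two_dvd)
      exact (Nat.Odd.sub_even hmn hn_odd hm_even).coprime_two_left.pow_left _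

lemma repSpec_cls {q : ℚ} (hq : 0 < q) {p : ℕ × ℕ} (t : ℤ) (hqp : q = 2 ^ t * (p.1 / p.2))
    (hle : (1 : ℚ) / 2 ≤ p.1 / p.2) (hlt : (p.1 : ℚ) / p.2 < 1) (hp : Nat.Coprime p.2 p.1) :
    repSpec (cls q hq) p :=
  ⟨lt_of_lt_of_le (by norm_num) hle, (cls_eq_cls_iff _ _).mpr ⟨t, hqp⟩, hle, hlt, hp⟩

lemma exists_repSpec (σ : MusInt) : ∃ p, repSpec σ p := by
  obtain ⟨⟨q, hq⟩, rfl⟩ := Quot.exists_rep σ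
  obtain ⟨t, hle, hlt⟩ := exists_two_zpow_mul_mem_Ico hq
  obtain ⟨a, b, hab, hr⟩ := Rat.exists_coprime_natCast_div (by positivity : 0 < 2 ^ t * q)
  refine ⟨(a, b), repSpec_cls hq (-t) ?_ (hr ▸ hle) (hr ▸ hlt) hab⟩
  rw [← hr, ← mul_assoc, ← zpow_add₀ two_ne_zero, neg_add_cancel, zpow_zero, one_mul]

lemma repSpec.fst_pos {σ : MusInt} {p : ℕ × ℕ} (h : repSpec σ p) : 0 < p.1 := by
  obtain ⟨hpos, -⟩ := h
  exact Nat.pos_of_ne_zero fun h₀ ↦ by simp [h₀] at hpos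

lemma repSpec.fst_lt_snd {σ : MusInt} {p : ℕ × ℕ} (h : repSpec σ p) : p.1 < p.2 := by
  obtain ⟨hpos, -, -, hlt, -⟩ := h
  have hsnd : (0 : ℚ) < p.2 := by
    exact_mod_cast Nat.pos_of_ne_zero fun h₀ ↦ by simp [h₀] at hpos
  exact_mod_cast (div_lt_one hsnd).mp hlt

lemma repSpec.unique {σ : MusInt} {p p' : ℕ × ℕ} (h : repSpec σ p) (h' : repSpec σ p') :
    p = p' := by
  have hb := h.fst_pos.trans h.fst_lt_snd
  have hb' := h'.fst_pos.trans h'.fst_lt_snd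
  obtain ⟨_, hσ, hle, hlt, hcop⟩ := h
  obtain ⟨_, hcls, hle', hlt', hcop'⟩ := h'
  obtain ⟨t, ht⟩ := (cls_eq_cls_iff _ _).mp (hσ.symm.trans hcls)
  obtain rfl : t = 0 := eq_zero_of_two_zpow_mul_mem_Ico ⟨hle', hlt'⟩ (ht ▸ ⟨hle, hlt⟩)
  rw [zpow_zero, one_mul] at ht
  obtain ⟨h₁, h₂⟩ := Rat.natCast_div_inj hb hb' (Nat.Coprime.symm hcop) (Nat.Coprime.symm hcop') ht
  exact Prod.ext h₁ h₂

lemma repSpec_rep (σ : MusInt) : repSpec σ (rep σ) := by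
  rw [rep, dif_pos (exists_repSpec σ)]
  exact (exists_repSpec σ).choose_spec

lemma rep_eq_of_repSpec {σ : MusInt} {p : ℕ × ℕ} (h : repSpec σ p) : rep σ = p :=
  (repSpec_rep σ).unique h

lemma mVal_pos (σ : MusInt) : 0 < mVal σ := (repSpec_rep σ).fst_pos

lemma mVal_lt_nVal (σ : MusInt) : mVal σ < nVal σ := (repSpec_rep σ).fst_lt_snd

lemma coprime_nVal_mVal (σ : MusInt) : Nat.Coprime (nVal σ) (mVal σ) := (repSpec_rep σ).2.2.2.2

/-- Truncated subtraction on `ℕ` encodes `ρ = max{0, k - ℓ}` and `τ = max{0, ℓ - k}`. -/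
theorem rep_kepler_general (σ : MusInt) (k μ ℓ : ℕ) (hμ : Odd μ)
    (hm : mVal σ = 2 ^ k * μ)
    (h1 : (1 : ℚ) / 2 ≤ (2 ^ ℓ * ((nVal σ : ℚ) - (mVal σ : ℚ))) / (mVal σ : ℚ))
    (h2 : (2 ^ ℓ * ((nVal σ : ℚ) - (mVal σ : ℚ))) / (mVal σ : ℚ) < 1) :
    nVal (kepler σ) = 2 ^ (k - ℓ) * μ ∧
      mVal (kepler σ) = 2 ^ (ℓ - k) * (nVal σ - mVal σ) := by
  have hm₀ : (0 : ℚ) < mVal σ := by exact_mod_cast mVal_pos σ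
  have hmn := mVal_lt_nVal σ
  have hK : (0 : ℚ) < ((nVal σ : ℚ) - mVal σ) / mVal σ :=
    div_pos (sub_pos.mpr (by exact_mod_cast hmn)) hm₀
  have hfrac : ((2 ^ (ℓ - k) * (nVal σ - mVal σ) : ℕ) : ℚ) / ((2 ^ (k - ℓ) * μ : ℕ) : ℚ) =
      2 ^ ℓ * ((nVal σ : ℚ) - mVal σ) / mVal σ := by
    calc _ = (2 : ℚ) ^ (ℓ - k) / 2 ^ (k - ℓ) * (((nVal σ : ℚ) - mVal σ) / μ) := by
          push_cast [Nat.cast_sub hmn.le]; exact mul_div_mul_comm _ _ _ _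
      _ = 2 ^ ℓ * ((nVal σ : ℚ) - mVal σ) / (2 ^ k * μ) := by
          rw [pow_tsub_div_pow_tsub two_ne_zero, mul_div_mul_comm]
      _ = _ := by rw [hm]; push_cast; rfl
  have hspec : repSpec (kepler σ) (2 ^ (ℓ - k) * (nVal σ - mVal σ), 2 ^ (k - ℓ) * μ) := by
    rw [kepler, dif_pos hK]
    refine repSpec_cls hK (-ℓ) ?_ (hfrac ▸ h1) (hfrac ▸ h2)
      ((coprime_nVal_mVal σ).two_pow_tsub_mul_odd hmn.le hμ hm)
    rw [hfrac, zpow_neg, zpow_natCast, mul_div_assoc, inv_mul_cancel_left₀ (by positivity)]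
  simp only [nVal, mVal, rep_eq_of_repSpec hspec, and_self]

/-- for `σ ≠ 𝔬`, writing `m_σ = 2^k * μ` with `μ` odd and choosing
`ℓ` with `1/2 ≤ 2^ℓ (n_σ - m_σ)/m_σ < 1`, we have `n_{K(σ)} = 2^(max{0,k-ℓ}) * μ`
and `m_{K(σ)} = 2^(max{0,ℓ-k}) * (n_σ - m_σ)` (here `-` on `ℕ` is truncated
subtraction, so `k - ℓ = max{0, k - ℓ}`). -/
theorem rep_kepler (σ : MusInt) (hσ : σ ≠ octave) (k μ ℓ : ℕ) (hμ : Odd μ)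
    (hm : mVal σ = 2 ^ k * μ)
    (h1 : (1 : ℚ) / 2 ≤ (2 ^ ℓ * ((nVal σ : ℚ) - (mVal σ : ℚ))) / (mVal σ : ℚ))
    (h2 : (2 ^ ℓ * ((nVal σ : ℚ) - (mVal σ : ℚ))) / (mVal σ : ℚ) < 1) :
    nVal (kepler σ) = 2 ^ (k - ℓ) * μ ∧
      mVal (kepler σ) = 2 ^ (ℓ - k) * (nVal σ - mVal σ) :=
  rep_kepler_general σ k μ ℓ hμ hm h1 h2
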